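/- Submodularity of influence spread: the set function S ↦ σ(S,∞), mapping a seed set S to the sum of equilibrium node values of the Heat Conduction model with boundary value 1 on S and 0 on the bias node, is a nonnegative, monotone, submodular function on subsets of non-bias nodes. -/
import Mathlib


/-- `v` is the equilibrium (harmonic extension) for the Heat Conduction model
with transition matrix `P`, seed set `S` (boundary value 1) and bias node
`bias` (boundary value 0): it is fixed on the boundary and harmonic elsewhere. -/
def IsHCEquilibrium {n : ℕ} (P : Matrix (Fin n) (Fin n) ℝ) (bias : Fin n)
    (S : Finset (Fin n)) (v : Fin n → ℝ) : Prop :=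
  v bias = 0 ∧ (∀ s ∈ S, v s = 1) ∧
    ∀ i, i ≠ bias → i ∉ S → v i = ∑ j, P i j * v j

/-- From every non-bias node there is a path of positive transitions of `P`
reaching the bias node (absorbing-chain structure). -/
def ReachesBias {n : ℕ} (P : Matrix (Fin n) (Fin n) ℝ) (bias : Fin n) : Prop :=
  ∀ i : Fin n, i ≠ bias → ∃ k : ℕ, ∃ p : Fin (k + 1) → Fin n,
    p 0 = i ∧ (∀ j : Fin k, 0 < P (p j.castSucc) (p j.succ)) ∧
      p (Fin.last k) = bias

/-- Discrete maximum (comparison) principle: a function harmonic off a boundary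
set `B ∋ bias` that is nonnegative on `B` is nonnegative everywhere. -/
lemma hc_comparison {n : ℕ} (P : Matrix (Fin n) (Fin n) ℝ)
    (hP0 : ∀ i j, 0 ≤ P i j) (hP1 : ∀ i, ∑ j, P i j = 1)
    (bias : Fin n) (hreach : ReachesBias P bias)
    (B : Finset (Fin n)) (hbias : bias ∈ B) (w : Fin n → ℝ)
    (hb : ∀ i ∈ B, 0 ≤ w i)
    (hh : ∀ i, i ∉ B → w i = ∑ j, P i j * w j) :
    ∀ i, 0 ≤ w i := by
  by_contra hc
  push_neg at hc
  obtain ⟨i₁, hi₁⟩ := hc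
  obtain ⟨i₀, -, hmin⟩ := Finset.exists_min_image Finset.univ w ⟨i₁, Finset.mem_univ _⟩
  have hmin' : ∀ j, w i₀ ≤ w j := fun j => hmin j (Finset.mem_univ j)
  have hneg : w i₀ < 0 := lt_of_le_of_lt (hmin' i₁) hi₁
  have hB : ∀ i, w i = w i₀ → i ∉ B := by
    intro i hi hiB
    have := hb i hiB
    rw [hi] at this
    linarith
  have prop : ∀ i, w i = w i₀ → ∀ j, 0 < P i j → w j = w i₀ := by
    intro i hi j hj
    have hiB := hB i hi
    have h1 : ∑ k, P i k * (w k - w i₀) = 0 := by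
      have he := hh i hiB
      have : ∑ k, P i k * (w k - w i₀) = (∑ k, P i k * w k) - (∑ k, P i k) * w i₀ := by
        rw [Finset.sum_mul]
        rw [← Finset.sum_sub_distrib]
        congr 1; ext k; ring
      rw [this, hP1 i, ← he, hi]; ring
    have h2 : ∀ k ∈ Finset.univ, 0 ≤ P i k * (w k - w i₀) :=
      fun k _ => mul_nonneg (hP0 i k) (sub_nonneg.2 (hmin' k))
    have h3 := (Finset.sum_eq_zero_iff_of_nonneg h2).1 h1 j (Finset.mem_univ j)
    have := (mul_eq_zero.1 h3).resolve_left (ne_of_gt hj)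
    linarith
  have hi₀B := hB i₀ rfl
  have hi₀ne : i₀ ≠ bias := fun h => hi₀B (h ▸ hbias)
  obtain ⟨k, p, hp0, hps, hpl⟩ := hreach i₀ hi₀ne
  have key : ∀ j : ℕ, ∀ hj : j < k + 1, w (p ⟨j, hj⟩) = w i₀ := by
    intro j
    induction j with
    | zero =>
      intro hj
      have : p ⟨0, hj⟩ = i₀ := hp0
      rw [this]
    | succ m ih =>
      intro hj
      have hm : m < k + 1 := Nat.lt_of_succ_lt hj
      have hmk : m < k := Nat.lt_of_succ_lt_succ hj
      have hpos := hps ⟨m, hmk⟩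
      exact prop _ (ih hm) _ hpos
  have hlast : w bias = w i₀ := by
    have := key k (Nat.lt_succ_self k)
    rwa [show (⟨k, Nat.lt_succ_self k⟩ : Fin (k+1)) = Fin.last k from rfl, hpl] at this
  have := hb bias hbias
  rw [hlast] at this
  linarith

section Aux

variable {n : ℕ} {P : Matrix (Fin n) (Fin n) ℝ} {bias : Fin n}
  {v : Finset (Fin n) → Fin n → ℝ}

lemma hc_nonneg (hP0 : ∀ i j, 0 ≤ P i j) (hP1 : ∀ i, ∑ j, P i j = 1)
    (hreach : ReachesBias P bias)
    (hv : ∀ A, bias ∉ A → IsHCEquilibrium P bias A (v A))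
    {A : Finset (Fin n)} (hA : bias ∉ A) : ∀ i, 0 ≤ v A i := by
  obtain ⟨h0, h1, hh⟩ := hv A hA
  refine hc_comparison P hP0 hP1 bias hreach (insert bias A) (Finset.mem_insert_self _ _)
    (v A) ?_ ?_
  · intro i hi
    rcases Finset.mem_insert.1 hi with h | h
    · rw [h, h0]
    · rw [h1 i h]; norm_num
  · intro i hi
    rw [Finset.mem_insert] at hi
    push_neg at hi
    exact hh i hi.1 hi.2

lemma hc_le_one (hP0 : ∀ i j, 0 ≤ P i j) (hP1 : ∀ i, ∑ j, P i j = 1)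
    (hreach : ReachesBias P bias)
    (hv : ∀ A, bias ∉ A → IsHCEquilibrium P bias A (v A))
    {A : Finset (Fin n)} (hA : bias ∉ A) : ∀ i, v A i ≤ 1 := by
  obtain ⟨h0, h1, hh⟩ := hv A hA
  have := hc_comparison P hP0 hP1 bias hreach (insert bias A) (Finset.mem_insert_self _ _)
    (fun i => 1 - v A i) ?_ ?_
  · intro i; have := this i; linarith
  · intro i hi
    rcases Finset.mem_insert.1 hi with h | h
    · rw [h, h0]; norm_num
    · rw [h1 i h]; norm_num
  · intro i hi
    rw [Finset.mem_insert] at hi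
    push_neg at hi
    have he := hh i hi.1 hi.2
    simp only [mul_sub, mul_one, Finset.sum_sub_distrib, hP1 i]
    rw [← he]

lemma hc_mono (hP0 : ∀ i j, 0 ≤ P i j) (hP1 : ∀ i, ∑ j, P i j = 1)
    (hreach : ReachesBias P bias)
    (hv : ∀ A, bias ∉ A → IsHCEquilibrium P bias A (v A))
    {T S : Finset (Fin n)} (hTS : T ⊆ S) (hS : bias ∉ S) :
    ∀ i, v T i ≤ v S i := by
  have hT : bias ∉ T := fun h => hS (hTS h)
  obtain ⟨hT0, hT1, hTh⟩ := hv T hT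
  obtain ⟨hS0, hS1, hSh⟩ := hv S hS
  have := hc_comparison P hP0 hP1 bias hreach (insert bias S) (Finset.mem_insert_self _ _)
    (fun i => v S i - v T i) ?_ ?_
  · intro i; have := this i; linarith
  · intro i hi
    rcases Finset.mem_insert.1 hi with h | h
    · rw [h, hS0, hT0]; norm_num
    · rw [hS1 i h]
      have := hc_le_one hP0 hP1 hreach hv hT i
      linarith
  · intro i hi
    rw [Finset.mem_insert] at hi
    push_neg at hi
    have heS := hSh i hi.1 hi.2
    have heT := hTh i hi.1 (fun h => hi.2 (hTS h))
    simp only [mul_sub, Finset.sum_sub_distrib]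
    rw [← heS, ← heT]

end Aux

/-- The influence spread `S ↦ σ(S,∞) = ∑ i, v^S i` is a
nonnegative, monotone, submodular function on subsets of non-bias nodes. -/
theorem hc_influence_spread_submodular (n : ℕ) (P : Matrix (Fin n) (Fin n) ℝ)
    (hP0 : ∀ i j, 0 ≤ P i j) (hP1 : ∀ i, ∑ j, P i j = 1)
    (bias : Fin n) (hreach : ReachesBias P bias)
    (v : Finset (Fin n) → Fin n → ℝ)
    (hv : ∀ A, bias ∉ A → IsHCEquilibrium P bias A (v A)) :
    (∀ A, bias ∉ A → 0 ≤ ∑ i, v A i) ∧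
      (∀ T S : Finset (Fin n), T ⊆ S → bias ∉ S →
        (∑ i, v T i) ≤ (∑ i, v S i)) ∧
      (∀ T S : Finset (Fin n), ∀ s : Fin n, T ⊆ S → bias ∉ S → s ∉ S →
        s ≠ bias →
        (∑ i, v (insert s T) i) - (∑ i, v T i) ≥
          (∑ i, v (insert s S) i) - (∑ i, v S i)) := by
  refine ⟨?_, ?_, ?_⟩
  · intro A hA
    exact Finset.sum_nonneg fun i _ => hc_nonneg hP0 hP1 hreach hv hA i
  · intro T S hTS hS
    exact Finset.sum_le_sum fun i _ => hc_mono hP0 hP1 hreach hv hTS hS i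
  · intro T S s hTS hS hsS hsb
    have hT : bias ∉ T := fun h => hS (hTS h)
    have hsT : bias ∉ insert s T := by
      rw [Finset.mem_insert]; push_neg; exact ⟨fun h => hsb h.symm, hT⟩
    have hsS' : bias ∉ insert s S := by
      rw [Finset.mem_insert]; push_neg; exact ⟨fun h => hsb h.symm, hS⟩
    have hTsT : T ⊆ insert s T := Finset.subset_insert _ _
    have hsTsS : insert s T ⊆ insert s S := Finset.insert_subset_insert _ hTS
    obtain ⟨hT0, hT1, hTh⟩ := hv T hT
    obtain ⟨hS0, hS1, hSh⟩ := hv S hS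
    obtain ⟨hsT0, hsT1, hsTh⟩ := hv (insert s T) hsT
    obtain ⟨hsS0, hsS1, hsSh⟩ := hv (insert s S) hsS'
    have key := hc_comparison P hP0 hP1 bias hreach
      (insert bias (insert s S)) (Finset.mem_insert_self _ _)
      (fun i => (v (insert s T) i - v T i) - (v (insert s S) i - v S i)) ?_ ?_
    · have hpt : ∀ i, v (insert s S) i - v S i ≤ v (insert s T) i - v T i := by
        intro i; have := key i; linarith
      have h1 : (∑ i, v (insert s S) i) - ∑ i, v S i ≤
          (∑ i, v (insert s T) i) - ∑ i, v T i := by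
        rw [← Finset.sum_sub_distrib, ← Finset.sum_sub_distrib]
        exact Finset.sum_le_sum fun i _ => hpt i
      linarith
    · intro i hi
      rcases Finset.mem_insert.1 hi with h | h
      · rw [h, hT0, hS0, hsT0, hsS0]; norm_num
      · rcases Finset.mem_insert.1 h with h' | h'
        · -- i = s
          rw [hsT1 i (h' ▸ Finset.mem_insert_self s T),
              hsS1 i (h' ▸ Finset.mem_insert_self s S)]
          have := hc_mono hP0 hP1 hreach hv hTS hS i
          linarith
        · -- i ∈ S
          rw [hS1 i h', hsS1 i (Finset.mem_insert_of_mem h')]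
          by_cases hiT : i ∈ T
          · rw [hT1 i hiT, hsT1 i (Finset.mem_insert_of_mem hiT)]; norm_num
          · have := hc_mono hP0 hP1 hreach hv hTsT hsT i
            linarith
    · intro i hi
      simp only [Finset.mem_insert] at hi
      push_neg at hi
      obtain ⟨hib, his, hiS⟩ := hi
      have hiT : i ∉ T := fun h => hiS (hTS h)
      have hisT : i ∉ insert s T := by
        rw [Finset.mem_insert]; push_neg; exact ⟨his, hiT⟩
      have hisS : i ∉ insert s S := by
        rw [Finset.mem_insert]; push_neg; exact ⟨his, hiS⟩
      have e1 := hsTh i hib hisT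
      have e2 := hTh i hib hiT
      have e3 := hsSh i hib hisS
      have e4 := hSh i hib hiS
      simp only [mul_sub, Finset.sum_sub_distrib]
      rw [← e1, ← e2, ← e3, ← e4]
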